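/- arXiv:2605.17080 — 8 statements merged into one kernel-verified Lean document; each statement's English description precedes it below -/
import Mathlib

section
/- Let G be a graph on n vertices. Then G is a complete split graph if and only if one of the following holds: (1) every vertex has degree n-1 (G is complete); (2) every vertex has degree 0 (G is edgeless); or (3) there exists an integer k with 1 ≤ k < n-1 such that the set of vertex degrees of G is exactly {n-1, k}, and k equals the number of vertices of degree n-1. -/
open SimpleGraph

universe u
variable {V : Type u}

/-- The diamond graph: `K₄` minus the edge `{0,1}`; its tips are `0` and `1`. -/
def diamondGraph : SimpleGraph (Fin 4) :=
  SimpleGraph.fromRel (fun a b =>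
    (a = 0 ∧ b = 2) ∨ (a = 0 ∧ b = 3) ∨ (a = 1 ∧ b = 2) ∨ (a = 1 ∧ b = 3) ∨ (a = 2 ∧ b = 3))

/-- The path on four vertices. -/
def pathGraph4 : SimpleGraph (Fin 4) :=
  SimpleGraph.fromRel (fun a b => (a = 0 ∧ b = 1) ∨ (a = 1 ∧ b = 2) ∨ (a = 2 ∧ b = 3))

/-- The paw: a triangle `0,1,2` plus a pendant vertex `3` adjacent to `0`. -/
def pawGraph : SimpleGraph (Fin 4) :=
  SimpleGraph.fromRel (fun a b =>
    (a = 0 ∧ b = 1) ∨ (a = 1 ∧ b = 2) ∨ (a = 0 ∧ b = 2) ∨ (a = 0 ∧ b = 3))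

/-- `K₂ + K₁`: an edge `0-1` and an isolated vertex `2`. -/
def k2k1Graph : SimpleGraph (Fin 3) :=
  SimpleGraph.fromRel (fun a b => a = 0 ∧ b = 1)

/-- The chordless cycle on four vertices. -/
def cycleGraph4 : SimpleGraph (Fin 4) :=
  SimpleGraph.fromRel (fun a b =>
    (a = 0 ∧ b = 1) ∨ (a = 1 ∧ b = 2) ∨ (a = 2 ∧ b = 3) ∨ (a = 3 ∧ b = 0))

/-- `P₄ + K₁`: a path `0-1-2-3` and an isolated vertex `4`. -/
def p4k1Graph : SimpleGraph (Fin 5) :=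
  SimpleGraph.fromRel (fun a b => (a = 0 ∧ b = 1) ∨ (a = 1 ∧ b = 2) ∨ (a = 2 ∧ b = 3))

/-- `P₃ + 2K₁`: a path `0-1-2` and isolated vertices `3,4`. -/
def p3TwoK1Graph : SimpleGraph (Fin 5) :=
  SimpleGraph.fromRel (fun a b => (a = 0 ∧ b = 1) ∨ (a = 1 ∧ b = 2))

/-- `2K₂ + K₁`: edges `0-1` and `2-3`, and an isolated vertex `4`. -/
def twoK2K1Graph : SimpleGraph (Fin 5) :=
  SimpleGraph.fromRel (fun a b => (a = 0 ∧ b = 1) ∨ (a = 2 ∧ b = 3))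

/-- `(K, S)` is a complete split partition of the subgraph of `G` induced by the set `A`:
`K ∪ S = A`, `K` and `S` are disjoint, `K` is a clique, `S` is independent, and `K` is
complete to `S`. -/
def IsCSPartWithin (G : SimpleGraph V) (A K S : Set V) : Prop :=
  K ∪ S = A ∧ Disjoint K S ∧
    (∀ a ∈ K, ∀ b ∈ K, a ≠ b → G.Adj a b) ∧
    (∀ a ∈ S, ∀ b ∈ S, ¬ G.Adj a b) ∧
    (∀ a ∈ K, ∀ b ∈ S, G.Adj a b)

/-- A graph is a complete split graph if it admits a complete split partition. -/
def IsCompleteSplit (G : SimpleGraph V) : Prop :=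
  ∃ K S : Set V, IsCSPartWithin G Set.univ K S

/-- The vertex set of the connected component of the subgraph of `G` induced by `A`
containing the vertex `z`. -/
def compSet (G : SimpleGraph V) (A : Set V) (z : V) : Set V :=
  {w | w ∈ A ∧ Relation.ReflTransGen (fun a b => G.Adj a b ∧ a ∈ A ∧ b ∈ A) z w}

/-- `G` is locally union of complete split: for every vertex `v`, every connected component
of the subgraph induced by the open neighborhood of `v` is a complete split graph. -/
def LUCS (G : SimpleGraph V) : Prop :=
  ∀ v : V, ∀ z ∈ G.neighborSet v,
    ∃ K S : Set V, IsCSPartWithin G (compSet G (G.neighborSet v) z) K S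

/-- `x` is a tip of some induced diamond of `G`. -/
def IsTip (G : SimpleGraph V) (x : V) : Prop :=
  ∃ f : diamondGraph ↪g G, x = f 0 ∨ x = f 1

/-- The set `N_G` of vertices of `G` that are tips of induced diamonds. -/
def tipSet (G : SimpleGraph V) : Set V := {x | IsTip G x}

/-- `x` and `y` are the two tips of a common induced diamond of `G`. -/
def TipPair (G : SimpleGraph V) (x y : V) : Prop :=
  ∃ f : diamondGraph ↪g G, (x = f 0 ∧ y = f 1) ∨ (x = f 1 ∧ y = f 0)

/-- `G` has no induced diamond. -/
def DiamondFree (G : SimpleGraph V) : Prop := IsEmpty (diamondGraph ↪g G)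

/-- `N` is an independent set of `G`. -/
def IsIndep (G : SimpleGraph V) (N : Set V) : Prop := ∀ x ∈ N, ∀ y ∈ N, ¬ G.Adj x y

/-- `G` is probe diamond-free: the vertices can be partitioned into probes and an
independent set `N` of nonprobes such that adding some set of non-edges with both
endpoints in `N` yields a diamond-free graph. -/
def ProbeDiamondFree (G : SimpleGraph V) : Prop :=
  ∃ N : Set V, IsIndep G N ∧ ∃ F : SimpleGraph V,
    (∀ x y : V, F.Adj x y → x ∈ N ∧ y ∈ N ∧ ¬ G.Adj x y) ∧ DiamondFree (G ⊔ F)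

lemma deg_max_adj [Fintype V] [DecidableEq V] (G : SimpleGraph V) [DecidableRel G.Adj]
    {v w : V} (h : G.degree v = Fintype.card V - 1) (hne : w ≠ v) : G.Adj v w := by
  have hsub : G.neighborFinset v ⊆ Finset.univ.erase v := by
    intro x hx
    simp only [Finset.mem_erase, Finset.mem_univ, and_true]
    exact fun hxv => G.irrefl (hxv ▸ (G.mem_neighborFinset v x).1 hx)
  have hcard : (Finset.univ.erase v).card ≤ (G.neighborFinset v).card := by
    rw [Finset.card_erase_of_mem (Finset.mem_univ v), Finset.card_univ,
      G.card_neighborFinset_eq_degree, h]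
  have heq := Finset.eq_of_subset_of_card_le hsub hcard
  have hw : w ∈ G.neighborFinset v := by rw [heq]; simp [hne]
  exact (G.mem_neighborFinset v w).1 hw

theorem stmt2 [Fintype V] [DecidableEq V] (G : SimpleGraph V) [DecidableRel G.Adj] :
    IsCompleteSplit G ↔
      ((∀ v : V, G.degree v = Fintype.card V - 1) ∨
        (∀ v : V, G.degree v = 0) ∨
        (∃ k : ℕ, 1 ≤ k ∧ k < Fintype.card V - 1 ∧
          {d : ℕ | ∃ v : V, G.degree v = d} = {Fintype.card V - 1, k} ∧
          {v : V | G.degree v = Fintype.card V - 1}.ncard = k)) := by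
  classical
  constructor
  · rintro ⟨K, S, hunion, hdisj, hKcl, hSind, hKS⟩
    have hmem : ∀ v : V, v ∈ K ∨ v ∈ S := fun v =>
      (Set.mem_union v K S).1 (hunion ▸ Set.mem_univ v)
    have hdegK : ∀ a ∈ K, G.degree a = Fintype.card V - 1 := by
      intro a ha
      have hset : G.neighborFinset a = Finset.univ.erase a := by
        ext w
        simp only [Finset.mem_erase, Finset.mem_univ, and_true, SimpleGraph.mem_neighborFinset]
        constructor
        · exact fun h => (G.ne_of_adj h).symm
        · intro hw
          rcases hmem w with hwK | hwS
          · exact hKcl a ha w hwK (Ne.symm hw)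
          · exact hKS a ha w hwS
      rw [← G.card_neighborFinset_eq_degree, hset,
        Finset.card_erase_of_mem (Finset.mem_univ a), Finset.card_univ]
    have hdegS : ∀ a ∈ S, G.degree a = K.ncard := by
      intro a ha
      have hset : (G.neighborFinset a : Set V) = K := by
        ext w
        simp only [Finset.mem_coe, SimpleGraph.mem_neighborFinset]
        constructor
        · intro h
          rcases hmem w with hwK | hwS
          · exact hwK
          · exact absurd h (hSind a ha w hwS)
        · intro hw
          exact (hKS w hw a ha).symm
      rw [← G.card_neighborFinset_eq_degree, ← Set.ncard_coe_finset, hset]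
    by_cases hcomp : ∀ v : V, G.degree v = Fintype.card V - 1
    · exact Or.inl hcomp
    · right
      push_neg at hcomp
      obtain ⟨v, hv⟩ := hcomp
      have hvS : v ∈ S := (hmem v).resolve_left (fun h => hv (hdegK v h))
      have hkne : K.ncard ≠ Fintype.card V - 1 := fun h => hv (h ▸ hdegS v hvS)
      by_cases hK0 : K = ∅
      · left
        intro w
        rcases hmem w with hwK | hwS
        · exact absurd hwK (by simp [hK0])
        · rw [hdegS w hwS, hK0, Set.ncard_empty]
      · right
        have hKne : K.Nonempty := Set.nonempty_iff_ne_empty.mpr hK0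
        have hsum : K.ncard + S.ncard = Fintype.card V := by
          rw [← Set.ncard_union_eq hdisj, hunion, Set.ncard_univ, Nat.card_eq_fintype_card]
        have hS1 : 0 < S.ncard := by rw [Set.ncard_pos]; exact ⟨v, hvS⟩
        have hK1 : 0 < K.ncard := by rw [Set.ncard_pos]; exact hKne
        refine ⟨K.ncard, hK1, by omega, ?_, ?_⟩
        · ext d
          simp only [Set.mem_setOf_eq, Set.mem_insert_iff, Set.mem_singleton_iff]
          constructor
          · rintro ⟨w, rfl⟩
            rcases hmem w with hwK | hwS
            · exact Or.inl (hdegK w hwK)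
            · exact Or.inr (hdegS w hwS)
          · rintro (rfl | rfl)
            · obtain ⟨a, ha⟩ := hKne
              exact ⟨a, hdegK a ha⟩
            · exact ⟨v, hdegS v hvS⟩
        · have hKeq : {w : V | G.degree w = Fintype.card V - 1} = K := by
            ext w
            simp only [Set.mem_setOf_eq]
            constructor
            · intro hw
              rcases hmem w with h | h
              · exact h
              · exact absurd hw (by rw [hdegS w h]; exact hkne)
            · exact hdegK w
          rw [hKeq]
  · rintro (hcomp | hempty | ⟨k, hk1, hk2, hdset, hcount⟩)
    · exact ⟨Set.univ, ∅, by simp, by simp,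
        fun a _ b _ hab => deg_max_adj G (hcomp a) (Ne.symm hab), by simp, by simp⟩
    · refine ⟨∅, Set.univ, by simp, by simp, by simp, ?_, by simp⟩
      intro a _ b _ hab
      have hmem : b ∈ G.neighborFinset a := (G.mem_neighborFinset a b).mpr hab
      have h0 := hempty a
      rw [← G.card_neighborFinset_eq_degree] at h0
      simp [Finset.card_eq_zero.mp h0] at hmem
    · set K : Set V := {v | G.degree v = Fintype.card V - 1} with hKdef
      refine ⟨K, Kᶜ, Set.union_compl_self K, disjoint_compl_right, ?_, ?_, ?_⟩
      · intro a ha b _ hab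
        exact deg_max_adj G ha (Ne.symm hab)
      · intro a ha b hb hab
        have hdega : G.degree a = k := by
          have hda : G.degree a ∈ {d : ℕ | ∃ v : V, G.degree v = d} := ⟨a, rfl⟩
          rw [hdset] at hda
          simp only [Set.mem_insert_iff, Set.mem_singleton_iff] at hda
          rcases hda with h | h
          · exact absurd h ha
          · exact h
        have hKf : K.toFinset.card = k := by
          rw [← Set.ncard_eq_toFinset_card']; exact hcount
        have hsub : insert b K.toFinset ⊆ G.neighborFinset a := by
          intro u hu
          rw [Finset.mem_insert] at hu
          rw [SimpleGraph.mem_neighborFinset]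
          rcases hu with rfl | hu
          · exact hab
          · have huK : u ∈ K := Set.mem_toFinset.mp hu
            have hu' : G.degree u = Fintype.card V - 1 := huK
            have hne : a ≠ u := fun h => ha (h ▸ hu')
            exact (deg_max_adj G hu' hne).symm
        have hb' : b ∉ K.toFinset := fun h => hb (Set.mem_toFinset.mp h : b ∈ K)
        have hle : k + 1 ≤ G.degree a := by
          rw [← G.card_neighborFinset_eq_degree]
          calc k + 1 = (insert b K.toFinset).card := by
                rw [Finset.card_insert_of_notMem hb', hKf]
            _ ≤ _ := Finset.card_le_card hsub
        omega
      · intro a ha b hb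
        have hne : a ≠ b := fun h => hb (h ▸ ha)
        exact deg_max_adj G ha (Ne.symm hne)
end

section
/- In a complete split graph G on n vertices satisfying case (3) of the degree characterization (degree set exactly {n-1, k} with 1 ≤ k < n-1 and k equal to the number of vertices of degree n-1), the pair (K, S) with K = {v : deg(v) = n-1} and S = V \ K is a complete split partition of G. -/
open SimpleGraph

universe u
variable {V : Type u}

theorem stmt3 [Fintype V] [DecidableEq V] (G : SimpleGraph V) [DecidableRel G.Adj]
    (hcs : IsCompleteSplit G) (k : ℕ) (hk1 : 1 ≤ k) (hk2 : k < Fintype.card V - 1)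
    (hdeg : {d : ℕ | ∃ v : V, G.degree v = d} = {Fintype.card V - 1, k})
    (hcount : {v : V | G.degree v = Fintype.card V - 1}.ncard = k) :
    IsCSPartWithin G Set.univ {v | G.degree v = Fintype.card V - 1}
      {v | G.degree v = Fintype.card V - 1}ᶜ := by
  classical
  set n := Fintype.card V with hn
  -- a vertex of degree n-1 is adjacent to every other vertex
  have hadj : ∀ v : V, G.degree v = n - 1 → ∀ w : V, w ≠ v → G.Adj v w := by
    intro v hv w hw
    have hsub : G.neighborFinset v ⊆ Finset.univ.erase v := by
      intro u hu
      rw [SimpleGraph.mem_neighborFinset] at hu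
      exact Finset.mem_erase.mpr ⟨(G.ne_of_adj hu).symm, Finset.mem_univ u⟩
    have hcard : (Finset.univ.erase v).card = n - 1 := by
      rw [Finset.card_erase_of_mem (Finset.mem_univ v), Finset.card_univ]
    have heq : G.neighborFinset v = Finset.univ.erase v := by
      apply Finset.eq_of_subset_of_card_le hsub
      rw [hcard, SimpleGraph.card_neighborFinset_eq_degree, hv]
    have : w ∈ G.neighborFinset v := by
      rw [heq]; exact Finset.mem_erase.mpr ⟨hw, Finset.mem_univ w⟩
    rwa [SimpleGraph.mem_neighborFinset] at this
  -- every vertex not of degree n-1 has degree k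
  have hdegk : ∀ v : V, G.degree v ≠ n - 1 → G.degree v = k := by
    intro v hv
    have : G.degree v ∈ ({n - 1, k} : Set ℕ) := by
      rw [← hdeg]; exact ⟨v, rfl⟩
    rcases this with h | h
    · exact absurd h hv
    · exact h
  -- the finset of big-degree vertices
  set Kf : Finset V := Finset.univ.filter (fun v => G.degree v = n - 1) with hKf
  have hKfcard : Kf.card = k := by
    have hcoe : ({v : V | G.degree v = n - 1} : Set V) = ↑Kf := by
      ext v; simp [hKf]
    rw [hcoe, Set.ncard_coe_finset] at hcount
    exact hcount
  -- all neighbors of a small-degree vertex are big-degree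
  have hnbr : ∀ v : V, G.degree v ≠ n - 1 → G.neighborFinset v = Kf := by
    intro v hv
    have hsub : Kf ⊆ G.neighborFinset v := by
      intro u hu
      rw [hKf, Finset.mem_filter] at hu
      have hne : v ≠ u := fun h => hv (h ▸ hu.2)
      rw [SimpleGraph.mem_neighborFinset]
      exact (hadj u hu.2 v hne).symm
    have : (G.neighborFinset v).card ≤ Kf.card := by
      rw [hKfcard, SimpleGraph.card_neighborFinset_eq_degree, hdegk v hv]
    exact (Finset.eq_of_subset_of_card_le hsub this).symm
  refine ⟨by simp, disjoint_compl_right, ?_, ?_, ?_⟩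
  · intro a ha b hb hab
    exact hadj a ha b (fun h => hab h.symm)
  · intro a ha b hb hAdj
    have hb' : b ∈ G.neighborFinset a := by rwa [SimpleGraph.mem_neighborFinset]
    rw [hnbr a ha] at hb'
    rw [hKf, Finset.mem_filter] at hb'
    exact hb hb'.2
  · intro a ha b hb
    have hne : b ≠ a := by
      rintro rfl; exact hb ha
    exact hadj a ha b hne
end

section
/- A graph G is locally union of complete split (i.e., for every vertex v, each connected component of the subgraph induced by the open neighborhood N(v) is a complete split graph) if and only if G contains no induced subgraph isomorphic to the complement of P_4 + K_1, the complement of P_3 + 2K_1, or the complement of 2K_2 + K_1. -/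
open SimpleGraph

universe u
variable {V : Type u}

/-! A graph is complete split iff it has no induced `K₂ + K₁` and no induced `C₄`: an edge of a
complete split graph has an end in the clique, which sees every vertex. The three forbidden graphs
are a vertex `v` joined to a `P₄`, a paw and a `C₄`. A `C₄` in `N(v)` is directly forbidden. An
induced `K₂ + K₁` (edge `ab`, vertex `c`) in one component of `N(v)` is impossible too: walking
from `c` towards `a` inside `N(v)`, the first vertex seeing `a` or `b` sees exactly one of them,
giving a `P₄` in `N(v)`, or both, giving a paw. -/

def K2K1FreeOn (G : SimpleGraph V) (C : Set V) : Prop :=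
  ∀ a ∈ C, ∀ b ∈ C, ∀ c ∈ C, G.Adj a b → G.Adj c a ∨ G.Adj c b

def C4FreeOn (G : SimpleGraph V) (C : Set V) : Prop :=
  ∀ p ∈ C, ∀ q ∈ C, ∀ r ∈ C, ∀ s ∈ C, G.Adj p q → G.Adj q r → G.Adj r s → G.Adj s p →
    p ≠ r → q ≠ s → G.Adj p r ∨ G.Adj q s

section

variable {G : SimpleGraph V}

theorem nonempty_embedding_of_adj_iff {α : Type*} {H : SimpleGraph α} (f : α → V)
    (hf : Function.Injective f) (h : ∀ i j, G.Adj (f i) (f j) ↔ H.Adj i j) :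
    Nonempty (H ↪g G) :=
  ⟨⟨⟨f, hf⟩, h _ _⟩⟩

theorem nonempty_compl_p4k1Graph_embedding {v a b c d : V}
    (hva : G.Adj v a) (hvb : G.Adj v b) (hvc : G.Adj v c) (hvd : G.Adj v d)
    (hab : G.Adj a b) (hbc : G.Adj b c) (hcd : G.Adj c d)
    (hac : ¬ G.Adj a c) (hbd : ¬ G.Adj b d) (had : ¬ G.Adj a d)
    (hac' : a ≠ c) (hbd' : b ≠ d) (had' : a ≠ d) :
    Nonempty (p4k1Graphᶜ ↪g G) := by
  refine nonempty_embedding_of_adj_iff ![b, d, a, c, v] ?_ fun i j => ?_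
  · intro i j
    fin_cases i <;> fin_cases j <;>
      simp_all [G.adj_comm, G.ne_of_adj] <;> intro h <;> subst h <;> simp_all
  · fin_cases i <;> fin_cases j <;> simp_all [p4k1Graph, G.adj_comm]

theorem nonempty_compl_p3TwoK1Graph_embedding {v a b c d : V}
    (hva : G.Adj v a) (hvb : G.Adj v b) (hvc : G.Adj v c) (hvd : G.Adj v d)
    (hab : G.Adj a b) (hbc : G.Adj b c) (hca : G.Adj c a) (hcd : G.Adj c d)
    (hda : ¬ G.Adj d a) (hdb : ¬ G.Adj d b) (hda' : d ≠ a) (hdb' : d ≠ b) :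
    Nonempty (p3TwoK1Graphᶜ ↪g G) := by
  refine nonempty_embedding_of_adj_iff ![a, d, b, v, c] ?_ fun i j => ?_
  · intro i j
    fin_cases i <;> fin_cases j <;>
      simp_all [G.adj_comm, G.ne_of_adj] <;> intro h <;> subst h <;> simp_all
  · fin_cases i <;> fin_cases j <;> simp_all [p3TwoK1Graph, G.adj_comm]

theorem nonempty_compl_twoK2K1Graph_embedding {v p q r s : V}
    (hvp : G.Adj v p) (hvq : G.Adj v q) (hvr : G.Adj v r) (hvs : G.Adj v s)
    (hpq : G.Adj p q) (hqr : G.Adj q r) (hrs : G.Adj r s) (hsp : G.Adj s p)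
    (hpr : ¬ G.Adj p r) (hqs : ¬ G.Adj q s) (hpr' : p ≠ r) (hqs' : q ≠ s) :
    Nonempty (twoK2K1Graphᶜ ↪g G) := by
  refine nonempty_embedding_of_adj_iff ![p, r, q, s, v] ?_ fun i j => ?_
  · intro i j
    fin_cases i <;> fin_cases j <;>
      simp_all [G.adj_comm, G.ne_of_adj] <;> intro h <;> subst h <;> simp_all
  · fin_cases i <;> fin_cases j <;> simp_all [twoK2K1Graph, G.adj_comm]

theorem mem_compSet_self {A : Set V} {z : V} (hz : z ∈ A) : z ∈ compSet G A z :=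
  ⟨hz, .refl⟩

theorem mem_compSet_of_adj {A : Set V} {z x y : V} (hx : x ∈ compSet G A z) (hy : y ∈ A)
    (hxy : G.Adj x y) : y ∈ compSet G A z :=
  ⟨hy, hx.2.tail ⟨hxy, hx.1, hy⟩⟩

theorem iff_of_mem_compSet {A : Set V} {z x y : V} {P : V → Prop}
    (hP : ∀ x ∈ A, ∀ y ∈ A, G.Adj x y → (P x ↔ P y))
    (hx : x ∈ compSet G A z) (hy : y ∈ compSet G A z) : P x ↔ P y := by
  have hz : ∀ {w}, w ∈ compSet G A z → (P z ↔ P w) := by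
    rintro w ⟨-, hzw⟩
    induction hzw with
    | refl => rfl
    | tail _ hst ih => exact ih.trans (hP _ hst.2.1 _ hst.2.2 hst.1)
  exact (hz hx).symm.trans (hz hy)

namespace IsCSPartWithin

variable {C K S : Set V}

theorem mem_or_mem (h : IsCSPartWithin G C K S) {x : V} (hx : x ∈ C) : x ∈ K ∨ x ∈ S := by
  rwa [← h.1] at hx

theorem adj_of_mem_left (h : IsCSPartWithin G C K S) {x y : V} (hx : x ∈ K) (hy : y ∈ C)
    (hxy : x ≠ y) : G.Adj x y :=
  (h.mem_or_mem hy).elim (h.2.2.1 x hx y · hxy) (h.2.2.2.2 x hx y)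

theorem k2k1FreeOn (h : IsCSPartWithin G C K S) : K2K1FreeOn G C := by
  intro a ha b hb c hc hab
  rcases h.mem_or_mem ha with haK | haS
  · rcases eq_or_ne c a with rfl | hca
    · exact .inr hab
    · exact .inl (h.adj_of_mem_left haK hc hca.symm).symm
  · rcases h.mem_or_mem hb with hbK | hbS
    · rcases eq_or_ne c b with rfl | hcb
      · exact .inl hab.symm
      · exact .inr (h.adj_of_mem_left hbK hc hcb.symm).symm
    · exact absurd hab (h.2.2.2.1 a haS b hbS)

theorem c4FreeOn (h : IsCSPartWithin G C K S) : C4FreeOn G C := by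
  intro p hp q hq r hr s hs hpq hqr hrs hsp hpr hqs
  rcases h.mem_or_mem hp with hpK | hpS
  · exact .inl (h.adj_of_mem_left hpK hr hpr)
  rcases h.mem_or_mem hq with hqK | hqS
  · exact .inr (h.adj_of_mem_left hqK hs hqs)
  exact absurd hpq (h.2.2.2.1 p hpS q hqS)

end IsCSPartWithin

theorem exists_isCSPartWithin_iff {C : Set V} :
    (∃ K S, IsCSPartWithin G C K S) ↔ K2K1FreeOn G C ∧ C4FreeOn G C := by
  refine ⟨fun ⟨K, S, h⟩ => ⟨h.k2k1FreeOn, h.c4FreeOn⟩, fun ⟨h3, h4⟩ => ?_⟩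
  set K := {x ∈ C | ∀ y ∈ C, y ≠ x → G.Adj x y}
  refine ⟨K, C \ K, Set.union_sdiff_cancel fun x hx => hx.1, Set.disjoint_sdiff_right,
    fun a ha b hb hab => ha.2 b hb.1 hab.symm, ?_,
    fun a ha b hb => ha.2 b hb.1 fun hba => hb.2 (hba ▸ ha)⟩
  intro x ⟨hx, hxK⟩ y ⟨hy, hyK⟩ hxy
  obtain ⟨x', hx', hx'x, hxx'⟩ : ∃ x' ∈ C, x' ≠ x ∧ ¬ G.Adj x x' := by
    simpa [K, hx] using hxK
  obtain ⟨y', hy', hy'y, hyy'⟩ : ∃ y' ∈ C, y' ≠ y ∧ ¬ G.Adj y y' := by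
    simpa [K, hy] using hyK
  have hx'y : G.Adj x' y := (h3 x hx y hy x' hx' hxy).resolve_left (hxx' ·.symm)
  have hy'x : G.Adj y' x := (h3 y hy x hx y' hy' hxy.symm).resolve_left (hyy' ·.symm)
  have hx'y' : G.Adj x' y' := (h3 x hx y' hy' x' hx' hy'x.symm).resolve_left (hxx' ·.symm)
  exact (h4 x hx y hy x' hx' y' hy' hxy hx'y.symm hx'y' hy'x hx'x.symm hy'y.symm).elim hxx' hyy'

theorem not_adj_of_adj_of_not_adj (h1 : ¬ Nonempty (p4k1Graphᶜ ↪g G))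
    (h2 : ¬ Nonempty (p3TwoK1Graphᶜ ↪g G)) {v a b x y : V}
    (hva : G.Adj v a) (hvb : G.Adj v b) (hvx : G.Adj v x) (hvy : G.Adj v y)
    (hab : G.Adj a b) (hxy : G.Adj x y) (hx : ¬ G.Adj x a ∧ ¬ G.Adj x b) :
    ¬ G.Adj y a ∧ ¬ G.Adj y b := by
  obtain ⟨hxa, hxb⟩ := hx
  have hxa' : x ≠ a := fun h => hxb (h ▸ hab)
  have hxb' : x ≠ b := fun h => hxa (h ▸ hab.symm)
  by_cases hya : G.Adj y a <;> by_cases hyb : G.Adj y b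
  · exact (h2 (nonempty_compl_p3TwoK1Graph_embedding hva hvb hvy hvx hab hyb.symm hya
      hxy.symm hxa hxb hxa' hxb')).elim
  · exact (h1 (nonempty_compl_p4k1Graph_embedding hvx hvy hva hvb hxy hya hab hxa hyb hxb
      hxa' (fun h => hxb (h ▸ hxy)) hxb')).elim
  · exact (h1 (nonempty_compl_p4k1Graph_embedding hvx hvy hvb hva hxy hyb hab.symm hxb hya hxa
      hxb' (fun h => hxa (h ▸ hxy)) hxa')).elim
  · exact ⟨hya, hyb⟩

theorem forall_k2k1FreeOn_compSet_iff :
    (∀ v, ∀ z ∈ G.neighborSet v, K2K1FreeOn G (compSet G (G.neighborSet v) z)) ↔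
      ¬ Nonempty (p4k1Graphᶜ ↪g G) ∧ ¬ Nonempty (p3TwoK1Graphᶜ ↪g G) := by
  refine ⟨fun h => ⟨?_, ?_⟩, fun ⟨h1, h2⟩ v z _ a ha b hb c hc hab => ?_⟩
  · -- `f 4` is joined to the induced path `f 2 - f 0 - f 3 - f 1`
    rintro ⟨f⟩
    have hf : ∀ {i j}, p4k1Graphᶜ.Adj i j → G.Adj (f i) (f j) := f.map_adj_iff.2
    have hN : ∀ i, i ≠ 4 → f i ∈ G.neighborSet (f 4) := fun i hi =>
      hf (by simp [p4k1Graph, hi.symm])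
    have h0 := mem_compSet_self (G := G) (hN 0 (by decide))
    have h2 := mem_compSet_of_adj h0 (hN 2 (by decide)) (hf (by simp [p4k1Graph]))
    have h3 := mem_compSet_of_adj h0 (hN 3 (by decide)) (hf (by simp [p4k1Graph]))
    have h1 := mem_compSet_of_adj h3 (hN 1 (by decide)) (hf (by simp [p4k1Graph]))
    rcases h _ _ (hN 0 (by decide)) _ h0 _ h2 _ h1 (hf (by simp [p4k1Graph])) with e | e <;>
      simpa [p4k1Graph] using f.map_adj_iff.1 e
  · -- `f 3` is joined to the triangle `f 0, f 2, f 4` with `f 1` pendant at `f 4`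
    rintro ⟨f⟩
    have hf : ∀ {i j}, p3TwoK1Graphᶜ.Adj i j → G.Adj (f i) (f j) := f.map_adj_iff.2
    have hN : ∀ i, i ≠ 3 → f i ∈ G.neighborSet (f 3) := fun i hi =>
      hf (by simp [p3TwoK1Graph, hi.symm])
    have h4 := mem_compSet_self (G := G) (hN 4 (by decide))
    have h0 := mem_compSet_of_adj h4 (hN 0 (by decide)) (hf (by simp [p3TwoK1Graph]))
    have h1 := mem_compSet_of_adj h4 (hN 1 (by decide)) (hf (by simp [p3TwoK1Graph]))
    have h2 := mem_compSet_of_adj h4 (hN 2 (by decide)) (hf (by simp [p3TwoK1Graph]))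
    rcases h _ _ (hN 4 (by decide)) _ h0 _ h2 _ h1 (hf (by simp [p3TwoK1Graph])) with e | e <;>
      simpa [p3TwoK1Graph] using f.map_adj_iff.1 e
  · by_contra! hc'
    refine ((iff_of_mem_compSet (P := fun w => ¬ G.Adj w a ∧ ¬ G.Adj w b) ?_ hc ha).1 hc').2 hab
    exact fun x hx y hy hxy => ⟨not_adj_of_adj_of_not_adj h1 h2 ha.1 hb.1 hx hy hab hxy,
      not_adj_of_adj_of_not_adj h1 h2 ha.1 hb.1 hy hx hab hxy.symm⟩

theorem forall_c4FreeOn_compSet_iff :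
    (∀ v, ∀ z ∈ G.neighborSet v, C4FreeOn G (compSet G (G.neighborSet v) z)) ↔
      ¬ Nonempty (twoK2K1Graphᶜ ↪g G) := by
  refine ⟨fun h => ?_, fun h v z _ p hp q hq r hr s hs hpq hqr hrs hsp hpr hqs => ?_⟩
  · -- `f 4` is joined to the induced cycle `f 0 - f 2 - f 1 - f 3`
    rintro ⟨f⟩
    have hf : ∀ {i j}, twoK2K1Graphᶜ.Adj i j → G.Adj (f i) (f j) := f.map_adj_iff.2
    have hN : ∀ i, i ≠ 4 → f i ∈ G.neighborSet (f 4) := fun i hi =>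
      hf (by simp [twoK2K1Graph, hi.symm])
    have h0 := mem_compSet_self (G := G) (hN 0 (by decide))
    have h2 := mem_compSet_of_adj h0 (hN 2 (by decide)) (hf (by simp [twoK2K1Graph]))
    have h3 := mem_compSet_of_adj h0 (hN 3 (by decide)) (hf (by simp [twoK2K1Graph]))
    have h1 := mem_compSet_of_adj h2 (hN 1 (by decide)) (hf (by simp [twoK2K1Graph]))
    rcases h _ _ (hN 0 (by decide)) _ h0 _ h2 _ h1 _ h3 (hf (by simp [twoK2K1Graph]))
        (hf (by simp [twoK2K1Graph])) (hf (by simp [twoK2K1Graph]))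
        (hf (by simp [twoK2K1Graph])) (f.injective.ne (by decide))
        (f.injective.ne (by decide)) with e | e <;>
      simpa [twoK2K1Graph] using f.map_adj_iff.1 e
  · by_contra! hc
    exact h (nonempty_compl_twoK2K1Graph_embedding hp.1 hq.1 hr.1 hs.1 hpq hqr hrs hsp hc.1 hc.2
      hpr hqs)

end

theorem stmt4 (G : SimpleGraph V) :
    LUCS G ↔
      ¬ Nonempty (p4k1Graphᶜ ↪g G) ∧ ¬ Nonempty (p3TwoK1Graphᶜ ↪g G) ∧
        ¬ Nonempty (twoK2K1Graphᶜ ↪g G) := by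
  rw [← and_assoc, ← forall_k2k1FreeOn_compSet_iff, ← forall_c4FreeOn_compSet_iff]
  simp only [LUCS, exists_isCSPartWithin_iff, imp_and, forall_and]
end

section
/- Let G be a connected graph containing an induced subgraph isomorphic to K_2 + K_1, with the K_2 on vertices x,y and the isolated vertex z (so xy is an edge, and z is nonadjacent to both x and y). Then G contains an induced subgraph isomorphic to P_4 or to the paw (triangle plus a pendant vertex). -/
open SimpleGraph

universe u
variable {V : Type u}

/-!
Follow a walk from `z` to `x` and stop at the first vertex `w` adjacent to `x` or `y`; its
predecessor `z'` on the walk is adjacent to neither. If `w` sees both `x` and `y`, then the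
triangle `wxy` with the pendant `z'` is an induced paw; otherwise, say `w` sees only `x`, and
`z' - w - x - y` is an induced `P₄`.
-/

namespace SimpleGraph

variable {G : SimpleGraph V}

def pathGraph4Embedding {a b c d : V}
    (hab : G.Adj a b) (hbc : G.Adj b c) (hcd : G.Adj c d)
    (hac : ¬G.Adj a c) (had : ¬G.Adj a d) (hbd : ¬G.Adj b d)
    (hac' : a ≠ c) (had' : a ≠ d) (hbd' : b ≠ d) :
    pathGraph4 ↪g G where
  toFun := ![a, b, c, d]
  inj' := by
    have := hab.ne; have := hbc.ne; have := hcd.ne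
    intro i j h
    fin_cases i <;> fin_cases j <;> simp_all [eq_comm]
  map_rel_iff' {i j} := by
    change G.Adj (![a, b, c, d] i) (![a, b, c, d] j) ↔ _
    fin_cases i <;> fin_cases j <;>
      simp [pathGraph4, hab, hbc, hcd, hac, had, hbd, hab.symm, hbc.symm, hcd.symm, G.adj_comm]

def pawGraphEmbedding {a b c d : V}
    (hab : G.Adj a b) (hbc : G.Adj b c) (hac : G.Adj a c) (had : G.Adj a d)
    (hbd : ¬G.Adj b d) (hcd : ¬G.Adj c d) (hbd' : b ≠ d) (hcd' : c ≠ d) :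
    pawGraph ↪g G where
  toFun := ![a, b, c, d]
  inj' := by
    have := hab.ne; have := hbc.ne; have := hac.ne; have := had.ne
    intro i j h
    fin_cases i <;> fin_cases j <;> simp_all [eq_comm]
  map_rel_iff' {i j} := by
    change G.Adj (![a, b, c, d] i) (![a, b, c, d] j) ↔ _
    fin_cases i <;> fin_cases j <;>
      simp [pawGraph, hab, hbc, hac, had, hbd, hcd, hab.symm, hbc.symm, hac.symm, had.symm,
        G.adj_comm]

theorem exists_pathGraph4_or_pawGraph_of_adj_adj {x y z w : V} (hxy : G.Adj x y)
    (hzw : G.Adj z w) (hwx : G.Adj w x) (hzx : ¬G.Adj z x) (hzy : ¬G.Adj z y) :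
    Nonempty (pathGraph4 ↪g G) ∨ Nonempty (pawGraph ↪g G) := by
  have hzx' : z ≠ x := by rintro rfl; exact hzy hxy
  have hzy' : z ≠ y := by rintro rfl; exact hzx hxy.symm
  by_cases hwy : G.Adj w y
  · exact .inr ⟨pawGraphEmbedding hwx hxy hwy hzw.symm (hzx ∘ G.adj_symm) (hzy ∘ G.adj_symm)
      hzx'.symm hzy'.symm⟩
  · have hwy' : w ≠ y := by rintro rfl; exact hzy hzw
    exact .inl ⟨pathGraph4Embedding hzw hwx hxy hzx hzy hwy hzx' hzy' hwy'⟩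

theorem exists_pathGraph4_or_pawGraph_of_walk {x y z : V} (hxy : G.Adj x y) (p : G.Walk z x)
    (hzx : ¬G.Adj z x) (hzy : ¬G.Adj z y) :
    Nonempty (pathGraph4 ↪g G) ∨ Nonempty (pawGraph ↪g G) := by
  induction p with
  | nil => exact absurd hxy hzy
  | @cons z w x hzw p ih =>
    by_cases hwx : G.Adj w x
    · exact exists_pathGraph4_or_pawGraph_of_adj_adj hxy hzw hwx hzx hzy
    by_cases hwy : G.Adj w y
    · exact exists_pathGraph4_or_pawGraph_of_adj_adj hxy.symm hzw hwy hzy hzx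
    exact ih hxy hwx hwy

end SimpleGraph

theorem stmt5_general (G : SimpleGraph V) (hconn : G.Connected) (x y z : V)
    (hxy : G.Adj x y) (hzx : ¬ G.Adj z x) (hzy : ¬ G.Adj z y) :
    Nonempty (pathGraph4 ↪g G) ∨ Nonempty (pawGraph ↪g G) :=
  exists_pathGraph4_or_pawGraph_of_walk hxy (hconn z x).some hzx hzy

theorem stmt5 (G : SimpleGraph V) (hconn : G.Connected) (x y z : V)
    (hxy : G.Adj x y) (hzx : ¬ G.Adj z x) (hzy : ¬ G.Adj z y)
    (hzx' : z ≠ x) (hzy' : z ≠ y) :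
    Nonempty (pathGraph4 ↪g G) ∨ Nonempty (pawGraph ↪g G) :=
  stmt5_general G hconn x y z hxy hzx hzy
end

section
/- Let G be a locally union of complete split graph such that the set N_G (vertices that are tips of induced diamonds) is an independent set. Then for every vertex v in N_G, the induced subgraph G[N(v)] is P_3-free (i.e., every connected component of G[N(v)] is a clique). -/
open SimpleGraph

universe u
variable {V : Type u}

theorem stmt7 (G : SimpleGraph V) (hl : LUCS G) (hind : IsIndep G (tipSet G))
    (v : V) (hv : v ∈ tipSet G) :
    ∀ a ∈ G.neighborSet v, ∀ b ∈ G.neighborSet v, ∀ c ∈ G.neighborSet v,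
      G.Adj a b → G.Adj b c → a ≠ c → G.Adj a c := by
  intro a ha b hb c hc hab hbc hne
  by_contra hac
  rw [SimpleGraph.mem_neighborSet] at ha hb hc
  have hva : a ≠ v := fun h => G.irrefl (h ▸ ha)
  have hvb : b ≠ v := fun h => G.irrefl (h ▸ hb)
  have hvc : c ≠ v := fun h => G.irrefl (h ▸ hc)
  have hab' : a ≠ b := G.ne_of_adj hab
  have hbc' : b ≠ c := G.ne_of_adj hbc
  let f : Fin 4 → V := ![a, c, v, b]
  have hinj : Function.Injective f := by
    intro i j hij
    fin_cases i <;> fin_cases j <;> simp_all [f] <;>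
      first
        | rfl
        | (exact absurd hij.symm hne)
        | (exact absurd hij hva)
        | (exact absurd hij.symm hva)
        | (exact absurd hij hvb)
        | (exact absurd hij.symm hvb)
        | (exact absurd hij hvc)
        | (exact absurd hij.symm hvc)
        | (exact absurd hij hab')
        | (exact absurd hij.symm hab')
        | (exact absurd hij hbc')
        | (exact absurd hij.symm hbc')
  let emb : diamondGraph ↪g G := by
    refine ⟨⟨f, hinj⟩, ?_⟩
    intro i j
    fin_cases i <;> fin_cases j <;>
      simp [f, diamondGraph, SimpleGraph.fromRel_adj] <;>
      first
        | (exact fun h => hac h)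
        | (exact fun h => hac h.symm)
        | (exact ha.symm)
        | exact hab
        | (exact ha)
        | (exact hab.symm)
        | (exact hc.symm)
        | (exact hbc.symm)
        | (exact hc)
        | (exact hbc)
        | (exact hb.symm)
        | (exact hb)
  have h0 : emb 0 = a := by simp [emb, f]
  have hatip : a ∈ tipSet G := ⟨emb, Or.inl h0.symm⟩
  exact hind v hv a hatip ha
end

section
/- Let G be a locally union of complete split graph such that N_G (the set of tips of induced diamonds) is an independent set. If K is a clique of G disjoint from N_G and v ∈ N_G has at least two neighbors in K, then v is adjacent to every vertex of K. -/
open SimpleGraph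

universe u
variable {V : Type u}

theorem stmt8 (G : SimpleGraph V) (hl : LUCS G) (hind : IsIndep G (tipSet G))
    (K : Set V) (hK : ∀ a ∈ K, ∀ b ∈ K, a ≠ b → G.Adj a b)
    (hdisj : Disjoint K (tipSet G)) (v : V) (hv : v ∈ tipSet G)
    (a b : V) (ha : a ∈ K) (hb : b ∈ K) (hab : a ≠ b)
    (hva : G.Adj v a) (hvb : G.Adj v b) :
    ∀ w ∈ K, G.Adj v w := by
  intro w hw
  by_contra hvw
  have hwt : w ∉ tipSet G := Set.disjoint_left.mp hdisj hw
  have hwa : w ≠ a := fun h => hvw (h ▸ hva)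
  have hwb : w ≠ b := fun h => hvw (h ▸ hvb)
  have hvw' : v ≠ w := fun h => hwt (h ▸ hv)
  have hva' : v ≠ a := hva.ne
  have hvb' : v ≠ b := hvb.ne
  have haw : G.Adj a w := hK a ha w hw hwa.symm
  have hbw : G.Adj b w := hK b hb w hw hwb.symm
  have hAB : G.Adj a b := hK a ha b hb hab
  refine hwt ⟨⟨⟨![v, w, a, b], ?_⟩, ?_⟩, Or.inr rfl⟩
  · intro i j hij
    fin_cases i <;> fin_cases j <;>
      simp_all [Matrix.cons_val_zero, Matrix.cons_val_one] <;>
      first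
        | rfl
        | exact absurd hij hvw' | exact absurd hij hva' | exact absurd hij hvb'
        | exact absurd hij hvw'.symm | exact absurd hij hwa | exact absurd hij hwb
        | exact absurd hij hva'.symm | exact absurd hij hwa.symm | exact absurd hij hab
        | exact absurd hij hvb'.symm | exact absurd hij hwb.symm | exact absurd hij hab.symm
  · intro i j
    fin_cases i <;> fin_cases j <;>
      simp [diamondGraph, SimpleGraph.fromRel_adj, Fin.ext_iff, -Fin.val_eq_zero_iff] <;>
      first
        | exact G.irrefl
        | exact hvw | exact hva | exact hvb
        | exact fun h => hvw h.symm | exact haw | exact hbw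
        | exact hva.symm | exact haw.symm | exact hAB
        | exact hvb.symm | exact hbw.symm | exact hAB.symm
        | exact iff_of_false hvw (by decide)
        | exact iff_of_false (fun h => hvw h.symm) (by decide)
        | exact iff_of_true hvb (by decide)
        | exact iff_of_true hvb.symm (by decide)
        | exact iff_of_true hbw (by decide)
        | exact iff_of_true hbw.symm (by decide)
        | exact iff_of_true hAB (by decide)
        | exact iff_of_true hAB.symm (by decide)
end

section
/- If G is a probe diamond-free graph, then G is a locally union of complete split graph: for every vertex v, each connected component of G[N(v)] is a complete split graph. -/
open SimpleGraph

universe u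
variable {V : Type u}

lemma localP3 {H : SimpleGraph V} (hd : DiamondFree H) {v a b c : V}
    (hav : H.Adj v a) (hbv : H.Adj v b) (hcv : H.Adj v c)
    (hab : H.Adj a b) (hbc : H.Adj b c) (hac : a ≠ c) : H.Adj a c := by
  by_contra hnac
  have h1 : a ≠ b := hab.ne
  have h2 : b ≠ c := hbc.ne
  have h3 : v ≠ a := hav.ne
  have h4 : v ≠ b := hbv.ne
  have h5 : v ≠ c := hcv.ne
  have hd' : IsEmpty (diamondGraph ↪g H) := hd
  refine hd'.false ⟨⟨![a, c, v, b], ?_⟩, ?_⟩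
  · intro i j hij
    fin_cases i <;> fin_cases j <;> simp_all
  · intro i j
    show H.Adj (![a, c, v, b] i) (![a, c, v, b] j) ↔ diamondGraph.Adj i j
    fin_cases i <;> fin_cases j <;>
      simp_all [diamondGraph, SimpleGraph.fromRel_adj, SimpleGraph.adj_comm]

theorem stmt10 (G : SimpleGraph V) (h : ProbeDiamondFree G) : LUCS G := by
  obtain ⟨N, hN, F, hF, hd⟩ := h
  intro v z hz
  have hzv : G.Adj v z := hz
  -- key: every vertex in the component is z or H-adjacent to z
  have key : ∀ w, Relation.ReflTransGen
      (fun a b => G.Adj a b ∧ a ∈ G.neighborSet v ∧ b ∈ G.neighborSet v) z w →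
      w = z ∨ (G ⊔ F).Adj z w := by
    intro w hw
    induction hw with
    | refl => exact Or.inl rfl
    | @tail b' c hzb hstep ih =>
      obtain ⟨hadj, hb'v, hcv⟩ := hstep
      rcases ih with rfl | hzb'
      · exact Or.inr ((sup_adj _ _ _ _).mpr (Or.inl hadj))
      · by_cases hcz : c = z
        · exact Or.inl hcz
        · refine Or.inr (localP3 hd (v := v)
            ((sup_adj _ _ _ _).mpr (Or.inl hzv))
            ((sup_adj _ _ _ _).mpr (Or.inl hb'v))
            ((sup_adj _ _ _ _).mpr (Or.inl hcv))
            hzb' ((sup_adj _ _ _ _).mpr (Or.inl hadj)) (fun h => hcz h.symm))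
  have pair : ∀ a ∈ compSet G (G.neighborSet v) z, ∀ b ∈ compSet G (G.neighborSet v) z,
      a ≠ b → (G ⊔ F).Adj a b := by
    rintro a ⟨hav, hza⟩ b ⟨hbv, hzb⟩ hne
    rcases key a hza with rfl | ha
    · rcases key b hzb with rfl | hb
      · exact absurd rfl hne
      · exact hb
    · rcases key b hzb with rfl | hb
      · exact ha.symm
      · exact localP3 hd (v := v)
          ((sup_adj _ _ _ _).mpr (Or.inl hav))
          ((sup_adj _ _ _ _).mpr (Or.inl hzv))
          ((sup_adj _ _ _ _).mpr (Or.inl hbv))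
          ha.symm hb hne
  refine ⟨compSet G (G.neighborSet v) z \ N, compSet G (G.neighborSet v) z ∩ N,
    ?_, ?_, ?_, ?_, ?_⟩
  · ext x
    simp only [Set.mem_union, Set.mem_diff, Set.mem_inter_iff]
    tauto
  · exact Set.disjoint_left.mpr (fun x hx hx2 => hx.2 hx2.2)
  · intro a ha b hb hne
    rcases (sup_adj _ _ _ _).mp (pair a ha.1 b hb.1 hne) with hg | hf
    · exact hg
    · exact absurd (hF _ _ hf).1 ha.2
  · intro a ha b hb
    exact hN a ha.2 b hb.2
  · intro a ha b hb
    have hne : a ≠ b := fun h => ha.2 (h ▸ hb.2)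
    rcases (sup_adj _ _ _ _).mp (pair a ha.1 b hb.1 hne) with hg | hf
    · exact hg
    · exact absurd (hF _ _ hf).1 ha.2
end

section
/- Let G be a locally union of complete split graph in which the set N_G of tips of induced diamonds is independent, and suppose G contains an induced subgraph isomorphic to S_4 (a diamond with tips x, y plus one additional vertex r adjacent exactly to x and y). Then the two degree-3 vertices of the diamond and the vertex r all lie outside N_G, while x, y ∈ N_G; in particular G contains an induced copy of the partitioned graph H_4 with respect to the partition (V \ N_G, N_G). -/
open SimpleGraph

universe u
variable {V : Type u}

theorem IsIndep.notMem_of_adj {G : SimpleGraph V} {N : Set V} (hN : IsIndep G N) {a b : V}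
    (ha : a ∈ N) (hab : G.Adj a b) : b ∉ N :=
  fun hb => hN a ha b hb hab

theorem embedding_zero_mem_tipSet {G : SimpleGraph V} (f : diamondGraph ↪g G) :
    f 0 ∈ tipSet G :=
  ⟨f, .inl rfl⟩

theorem embedding_one_mem_tipSet {G : SimpleGraph V} (f : diamondGraph ↪g G) :
    f 1 ∈ tipSet G :=
  ⟨f, .inr rfl⟩

theorem exists_diamond_embedding {G : SimpleGraph V} {x y u z : V} (hxy : x ≠ y)
    (hnxy : ¬ G.Adj x y) (huz : G.Adj u z) (hxu : G.Adj x u) (hxz : G.Adj x z)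
    (hyu : G.Adj y u) (hyz : G.Adj y z) :
    ∃ f : diamondGraph ↪g G, f 0 = x ∧ f 1 = y := by
  have := hxu.ne; have := hxz.ne; have := hyu.ne; have := hyz.ne; have := huz.ne
  have hinj : Function.Injective ![x, y, u, z] := by
    intro a b h
    fin_cases a <;> fin_cases b <;> simp_all [eq_comm]
  have hadj : ∀ a b, G.Adj (![x, y, u, z] a) (![x, y, u, z] b) ↔ diamondGraph.Adj a b := by
    intro a b
    fin_cases a <;> fin_cases b <;> simp_all [diamondGraph, adj_comm]
  exact ⟨⟨⟨_, hinj⟩, hadj _ _⟩, rfl, rfl⟩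

theorem stmt16_general (G : SimpleGraph V) (hind : IsIndep G (tipSet G))
    (x y u z r : V) (hxy : x ≠ y)
    (huz : G.Adj u z) (hxu : G.Adj x u) (hxz : G.Adj x z)
    (hyu : G.Adj y u) (hyz : G.Adj y z) (hnxy : ¬ G.Adj x y)
    (hrx : G.Adj r x) :
    u ∉ tipSet G ∧ z ∉ tipSet G ∧ r ∉ tipSet G ∧ x ∈ tipSet G ∧ y ∈ tipSet G := by
  obtain ⟨f, rfl, rfl⟩ := exists_diamond_embedding hxy hnxy huz hxu hxz hyu hyz
  have hx := embedding_zero_mem_tipSet f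
  exact ⟨hind.notMem_of_adj hx hxu, hind.notMem_of_adj hx hxz, hind.notMem_of_adj hx hrx.symm,
    hx, embedding_one_mem_tipSet f⟩

theorem stmt16 (G : SimpleGraph V) (hl : LUCS G) (hind : IsIndep G (tipSet G))
    (x y u z r : V) (hxy : x ≠ y) (hru : r ≠ u) (hrz : r ≠ z)
    (huz : G.Adj u z) (hxu : G.Adj x u) (hxz : G.Adj x z)
    (hyu : G.Adj y u) (hyz : G.Adj y z) (hnxy : ¬ G.Adj x y)
    (hrx : G.Adj r x) (hry : G.Adj r y) (hnru : ¬ G.Adj r u) (hnrz : ¬ G.Adj r z) :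
    u ∉ tipSet G ∧ z ∉ tipSet G ∧ r ∉ tipSet G ∧ x ∈ tipSet G ∧ y ∈ tipSet G :=
  stmt16_general G hind x y u z r hxy huz hxu hxz hyu hyz hnxy hrx
end
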